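/- arXiv:1606.06362 — 3 statements merged into one kernel-verified Lean document; each statement's English description precedes it below -/
import Mathlib

section
/- Let p be an odd prime, m a positive integer, G = Gal(ℚ(ζ_{p^m})/ℚ), acting on the group μ_{2p^m} of 2p^m-th roots of unity. Then the Tate cohomology group Ĥ⁰(G, μ_{2p^m}) = (μ_{2p^m})^G / N_G(μ_{2p^m}) has order 2, where N_G(x) = ∏_{σ∈G} σ(x). -/
/-! Write `n = p^m` and let `c` be the automorphism `ζ ↦ ζ⁻¹` of `K = ℚ(ζ)` (complex
conjugation). Since `n` is odd, `μ_{2n} = ±μ_n`, so `c` acts on `μ_{2n}` by inversion. A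
Galois-fixed `x ∈ μ_{2n}` therefore satisfies `x = x⁻¹`, so the invariants are `{±1}`. In the norm
`∏ σ(x)`, the factors for `σ` and `σc` are mutually inverse, and `σc ≠ σ` because `n > 2`, so
every norm is `1`. -/

theorem Fintype.prod_eq_one_of_map_mul_eq_inv {G M : Type*} [Group G] [Fintype G] [CommGroup M]
    {f : G → M} {τ : G} (hτ : τ * τ = 1) (hτ₁ : τ ≠ 1) (hf : ∀ σ, f (σ * τ) = (f σ)⁻¹) :
    ∏ σ, f σ = 1 :=
  Finset.prod_ninvolution (· * τ) (fun σ ↦ by rw [hf, mul_inv_cancel])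
    (fun σ _ h ↦ hτ₁ (mul_eq_left.mp h)) (fun _ ↦ Finset.mem_univ _)
    (fun σ ↦ by rw [mul_assoc, hτ, mul_one])

theorem rootsOfUnity_two_mul_le_sup {M : Type*} [CommMonoid M] {n : ℕ} (hn : Odd n) :
    rootsOfUnity (2 * n) M ≤ rootsOfUnity 2 M ⊔ rootsOfUnity n M := by
  intro x hx
  rw [mem_rootsOfUnity] at hx
  obtain ⟨k, hk⟩ : Even (n + 1) := hn.add_one
  have h2 : x ^ n ∈ rootsOfUnity 2 M := by
    rw [mem_rootsOfUnity, ← pow_mul, mul_comm, hx]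
  have hn' : x ^ (n + 1) ∈ rootsOfUnity n M := by
    have : (n + 1) * n = 2 * n * k := by rw [hk]; ring
    rw [mem_rootsOfUnity, ← pow_mul, this, pow_mul, hx, one_pow]
  have hx' : x = (x ^ n)⁻¹ * x ^ (n + 1) := by group
  rw [hx']
  exact mul_mem (inv_mem (Subgroup.mem_sup_left h2)) (Subgroup.mem_sup_right hn')

theorem Units.mem_rootsOfUnity_two_iff {R : Type*} [CommRing R] [NoZeroDivisors R] {x : Rˣ} :
    x ∈ rootsOfUnity 2 R ↔ x = 1 ∨ x = -1 := by
  rw [mem_rootsOfUnity, Units.ext_iff, Units.ext_iff, Units.ext_iff, Units.val_pow_eq_pow_val,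
    Units.val_one, Units.val_neg, Units.val_one, sq_eq_one_iff]

namespace IsCyclotomicExtension

variable (n : ℕ) [NeZero n] (K : Type*) [Field K] [CharZero K] [IsCyclotomicExtension {n} ℚ K]

noncomputable def conj : K ≃ₐ[ℚ] K :=
  (autEquivPow K (Polynomial.cyclotomic.irreducible_rat (NeZero.pos n))).symm (-1)

theorem conj_mul_self : conj n K * conj n K = 1 := by
  rw [conj, ← map_mul, neg_one_mul, neg_neg, map_one]

theorem conj_ne_one (hn : 2 < n) : conj n K ≠ 1 := by
  have : Fact (2 < n) := ⟨hn⟩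
  rw [conj, Ne, MulEquiv.map_eq_one_iff, Units.ext_iff]
  exact ZMod.neg_one_ne_one

theorem conj_zeta : conj n K (zeta n ℚ K) = (zeta n ℚ K)⁻¹ := by
  have hζ := zeta_spec n ℚ K
  have hconj : hζ.autToPow ℚ (conj n K) = -1 :=
    (autEquivPow K (Polynomial.cyclotomic.irreducible_rat (NeZero.pos n))).apply_symm_apply _
  rw [← hζ.autToPow_spec ℚ, hconj]
  obtain ⟨k, rfl⟩ := Nat.exists_eq_succ_of_ne_zero (NeZero.ne n)
  rw [Units.val_neg, Units.val_one, ZMod.val_neg_one]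
  exact eq_inv_of_mul_eq_one_left (by rw [← pow_succ, hζ.pow_eq_one])

theorem units_map_conj_of_mem_rootsOfUnity {x : Kˣ} (hx : x ∈ rootsOfUnity n K) :
    Units.map (conj n K : K →* K) x = x⁻¹ := by
  obtain ⟨i, -, hi⟩ := (zeta_spec n ℚ K).eq_pow_of_pow_eq_one ((mem_rootsOfUnity' n x).mp hx)
  ext
  simp [← hi, conj_zeta]

theorem units_map_conj_of_mem_rootsOfUnity_two_mul (hn : Odd n) {x : Kˣ}
    (hx : x ∈ rootsOfUnity (2 * n) K) : Units.map (conj n K : K →* K) x = x⁻¹ := by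
  suffices rootsOfUnity (2 * n) K ≤ (Units.map (conj n K : K →* K)).eqLocus invMonoidHom from
    this hx
  refine (rootsOfUnity_two_mul_le_sup hn).trans
    (sup_le (fun y hy ↦ ?_) fun y ↦ units_map_conj_of_mem_rootsOfUnity n K)
  rcases Units.mem_rootsOfUnity_two_iff.mp hy with rfl | rfl <;> ext <;> simp

variable {n K}

theorem mem_rootsOfUnity_two_mul_and_forall_units_map_eq_iff (hn : Odd n) {x : Kˣ} :
    (x ∈ rootsOfUnity (2 * n) K ∧ ∀ σ : K ≃ₐ[ℚ] K, Units.map (σ : K →* K) x = x) ↔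
      x ∈ rootsOfUnity 2 K := by
  constructor
  · rintro ⟨hx, hfix⟩
    rw [mem_rootsOfUnity, sq, ← inv_eq_iff_mul_eq_one,
      ← units_map_conj_of_mem_rootsOfUnity_two_mul n K hn hx, hfix]
  · intro hx
    refine ⟨rootsOfUnity_le_of_dvd (dvd_mul_right 2 n) hx, fun σ ↦ ?_⟩
    rcases Units.mem_rootsOfUnity_two_iff.mp hx with rfl | rfl <;> ext <;> simp

theorem prod_units_map_eq_one_of_mem_rootsOfUnity_two_mul [Fintype (K ≃ₐ[ℚ] K)] (hn : Odd n)
    (h2 : 2 < n) {x : Kˣ} (hx : x ∈ rootsOfUnity (2 * n) K) :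
    ∏ σ : K ≃ₐ[ℚ] K, Units.map (σ : K →* K) x = 1 :=
  Fintype.prod_eq_one_of_map_mul_eq_inv (conj_mul_self n K) (conj_ne_one n K h2) fun σ ↦ by
    rw [← map_inv, ← units_map_conj_of_mem_rootsOfUnity_two_mul n K hn hx]
    rfl

end IsCyclotomicExtension

/-- The Tate cohomology group `Ĥ⁰(G, μ_{2p^m}) = (μ_{2p^m})^G / N_G(μ_{2p^m})` has order 2,
where `G = Gal(ℚ(ζ_{p^m})/ℚ)` acts on the `2p^m`-th roots of unity. -/
theorem stmt_2 (p m : ℕ) (hp : p.Prime) (hodd : Odd p) (hm : 1 ≤ m)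
    (K : Type) [Field K] [CharZero K]
    [IsCyclotomicExtension {p ^ m} ℚ K]
    [Fintype (K ≃ₐ[ℚ] K)]
    (Fix : Subgroup Kˣ)
    (hFix : ∀ x, x ∈ Fix ↔ x ∈ rootsOfUnity (2 * p ^ m) K ∧
      ∀ σ : K ≃ₐ[ℚ] K, Units.map (σ : K →* K) x = x)
    (Nrm : Subgroup Kˣ)
    (hNrm : ∀ y, y ∈ Nrm ↔ ∃ x ∈ rootsOfUnity (2 * p ^ m) K,
      y = ∏ σ : K ≃ₐ[ℚ] K, Units.map (σ : K →* K) x) :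
    Nat.card (Fix ⧸ Nrm.subgroupOf Fix) = 2 := by
  have : NeZero (p ^ m) := ⟨pow_ne_zero m hp.ne_zero⟩
  have hn : Odd (p ^ m) := hodd.pow
  have h2 : 2 < p ^ m := by
    have hp2 : 2 < p := by obtain ⟨k, rfl⟩ := hodd; have := hp.two_le; omega
    exact hp2.trans_le (Nat.le_self_pow (by omega) p)
  have hFix' : Fix = rootsOfUnity 2 K := by
    ext x
    rw [hFix, IsCyclotomicExtension.mem_rootsOfUnity_two_mul_and_forall_units_map_eq_iff hn]
  have hNrm' : Nrm = ⊥ := by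
    refine (Subgroup.eq_bot_iff_forall _).mpr fun y hy ↦ ?_
    obtain ⟨x, hx, rfl⟩ := (hNrm y).mp hy
    exact IsCyclotomicExtension.prod_units_map_eq_one_of_mem_rootsOfUnity_two_mul hn h2 hx
  rw [hNrm', Subgroup.bot_subgroupOf, ← Subgroup.index, Subgroup.index_bot, hFix',
    (IsPrimitiveRoot.neg_one 0 two_ne_zero.symm).card_rootsOfUnity]
end

section
/- For any odd prime p and m ≥ 1, the map ℚ/ℤ → ℚ(ζ_{p^m})^× ⊗ ℚ/ℤ sending x to √(p*) ⊗ x is injective, where p* = (−1)^((p−1)/2) p and √(p*) is a square root of p* lying in ℚ(ζ_{p^m}). -/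
/-!
Suppose `√p* ⊗ x = 0` with `x ≠ 0`. Exactness of `A → A ⊗ ℚ → A ⊗ ℚ/ℤ → 0` for `A = Kˣ` makes
`√p*` a `q`-th power up to a root of unity, for a prime `q` dividing the order of `x`. After
adjoining more roots of unity, `√p*` is a genuine `q`-th power in a cyclotomic, hence abelian,
extension `L` of `ℚ`, i.e. `p* = w ^ (2q)` with `w ∈ L`. Since `Gal(L/ℚ)` is commutative, the Kummer
cocycle `σ ↦ σ w / w` is a coboundary, which produces a rational `q`-th root of `p*` (`q` odd),
resp. a rational square root of `±p*` (`q = 2`); both contradict `v_p(p*) = 1`.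
-/

open TensorProduct

section TensorRatCircle

variable {A : Type*} [AddCommGroup A]

theorem exists_tmul_one_eq_of_tmul_eq_zero {a : A} {r : ℚ}
    (h : a ⊗ₜ[ℤ] (r : AddCircle (1 : ℚ)) = 0) : ∃ b : A, a ⊗ₜ[ℤ] r = b ⊗ₜ[ℤ] (1 : ℚ) := by
  let ι : ℤ →ₗ[ℤ] ℚ := (Int.castAddHom ℚ).toIntLinearMap
  let π : ℚ →ₗ[ℤ] AddCircle (1 : ℚ) := (QuotientAddGroup.mk' _).toIntLinearMap
  have hexact : Function.Exact ι π := fun y ↦ by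
    simp [π, ι, QuotientAddGroup.eq_zero_iff, AddSubgroup.mem_zmultiples_iff]
  have hι (z : A ⊗[ℤ] ℤ) : LinearMap.lTensor A ι z = TensorProduct.rid ℤ A z ⊗ₜ 1 := by
    induction z using TensorProduct.induction_on with
    | zero => simp
    | tmul b n => simp [ι, TensorProduct.smul_tmul]
    | add x y hx hy => simp [hx, hy, TensorProduct.add_tmul]
  obtain ⟨z, hz⟩ := (lTensor_exact A hexact (QuotientAddGroup.mk'_surjective _) (a ⊗ₜ r)).mp h
  exact ⟨_, hz.symm.trans (hι z)⟩

theorem isOfFinAddOrder_of_tmul_one_eq_zero {a : A}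
    (h : a ⊗ₜ[ℤ] (1 : ℚ) = 0) : IsOfFinAddOrder a := by
  have : IsLocalizedModule (nonZeroDivisors ℤ) (TensorProduct.mk ℤ ℚ A 1) :=
    (isLocalizedModule_iff_isBaseChange _ ℚ _).mpr (TensorProduct.isBaseChange ℤ A ℚ)
  obtain ⟨k, hk⟩ := (IsLocalizedModule.eq_zero_iff (nonZeroDivisors ℤ)
    (TensorProduct.mk ℤ ℚ A 1)).mp (by simpa using congrArg (TensorProduct.comm ℤ A ℚ) h)
  exact isOfFinAddOrder_iff_zsmul_eq_zero.mpr ⟨k, nonZeroDivisors.coe_ne_zero k, hk⟩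

theorem isOfFinAddOrder_sub_den_smul_of_tmul_eq_zero {a : A} {r : ℚ}
    (h : a ⊗ₜ[ℤ] (r : AddCircle (1 : ℚ)) = 0) :
    ∃ b : A, IsOfFinAddOrder (a - r.den • b) := by
  obtain ⟨b, hb⟩ := exists_tmul_one_eq_of_tmul_eq_zero h
  have hnum : (r.num • a - r.den • b) ⊗ₜ[ℤ] (1 : ℚ) = 0 := by
    have : (r.den : ℤ) • (a ⊗ₜ[ℤ] r) = (r.num • a) ⊗ₜ[ℤ] (1 : ℚ) := by
      rw [← tmul_smul, smul_tmul, zsmul_eq_mul, zsmul_eq_mul, mul_one]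
      congr 1
      exact_mod_cast Rat.den_mul_eq_num r
    rw [sub_tmul, ← this, hb, smul_tmul', sub_eq_zero, natCast_zsmul]
  obtain ⟨k, hk, hkr⟩ :=
    isOfFinAddOrder_iff_zsmul_eq_zero.mp (isOfFinAddOrder_of_tmul_one_eq_zero hnum)
  obtain ⟨u, v, huv⟩ : IsCoprime r.num r.den := Int.isCoprime_iff_gcd_eq_one.mpr r.reduced
  refine ⟨u • b + v • a, isOfFinAddOrder_iff_zsmul_eq_zero.mpr ⟨k, hk, ?_⟩⟩
  calc k • (a - r.den • (u • b + v • a))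
      = k • ((u * r.num + v * r.den) • a - r.den • (u • b + v • a)) := by rw [huv, one_smul]
    _ = u • k • (r.num • a - r.den • b) := by module
    _ = 0 := by rw [hkr, smul_zero]

end TensorRatCircle

theorem IsPrimitiveRoot.pow_eq_pow_iff_natCast_eq {M : Type*} [CommMonoid M] {ζ : M} {n : ℕ}
    [NeZero n] (hζ : IsPrimitiveRoot ζ n) {i j : ℕ} :
    ζ ^ i = ζ ^ j ↔ (i : ZMod n) = j := by
  rw [(hζ.isOfFinOrder (NeZero.ne n)).pow_eq_pow_iff_modEq, ← hζ.eq_orderOf,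
    ZMod.natCast_eq_natCast_iff]

section Kummer

variable {F L : Type*} [Field F] [Field L] [Algebra F L] {n : ℕ} [NeZero n] {ζ w : L}

theorem IsPrimitiveRoot.exists_map_eq_pow (hζ : IsPrimitiveRoot ζ n) (σ : L ≃ₐ[F] L) :
    ∃ x : ℕ, σ ζ = ζ ^ x := by
  obtain ⟨x, -, hx⟩ :=
    hζ.eq_pow_of_pow_eq_one (ξ := σ ζ) (by rw [← map_pow, hζ.pow_eq_one, map_one])
  exact ⟨x, hx.symm⟩

theorem IsPrimitiveRoot.exists_map_eq_mul_pow (hζ : IsPrimitiveRoot ζ n) (hw : w ≠ 0) {c : F}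
    (hwc : w ^ n = algebraMap F L c) (σ : L ≃ₐ[F] L) : ∃ a : ℕ, σ w = w * ζ ^ a := by
  obtain ⟨a, -, ha⟩ := hζ.eq_pow_of_pow_eq_one (ξ := σ w / w) (by
    rw [div_pow, ← map_pow, hwc, AlgEquiv.commutes, ← hwc, div_self (pow_ne_zero n hw)])
  exact ⟨a, by rw [ha, mul_div_cancel₀ _ hw]⟩

theorem IsPrimitiveRoot.natCast_add_mul_eq_of_commute (hζ : IsPrimitiveRoot ζ n) (hw : w ≠ 0)
    {σ τ : L ≃ₐ[F] L} (hστ : σ (τ w) = τ (σ w)) {a b x y : ℕ}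
    (ha : σ w = w * ζ ^ a) (hx : σ ζ = ζ ^ x) (hb : τ w = w * ζ ^ b) (hy : τ ζ = ζ ^ y) :
    (a + x * b : ZMod n) = b + y * a := by
  have hστw : σ (τ w) = w * ζ ^ (a + x * b) := by
    rw [hb, map_mul, ha, map_pow, hx, ← pow_mul, pow_add, mul_assoc]
  have hτσw : τ (σ w) = w * ζ ^ (b + y * a) := by
    rw [ha, map_mul, hb, map_pow, hy, ← pow_mul, pow_add, mul_assoc]
  rw [hστw, hτσw] at hστ
  exact_mod_cast hζ.pow_eq_pow_iff_natCast_eq.mp (mul_left_cancel₀ hw hστ)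

theorem exists_algebraMap_eq_of_forall_map_eq [IsGalois F L] {x : L}
    (hx : ∀ σ : L ≃ₐ[F] L, σ x = x) : ∃ u : F, algebraMap F L u = x :=
  IntermediateField.mem_bot.mp ((InfiniteGalois.mem_bot_iff_fixed x).mpr hx)

/-- The witness is `ζ ^ (d * b)` where `τ w = w * ζ ^ b`: if `σ w = w * ζ ^ a` and `σ ζ = ζ ^ x`,
commutativity gives `a * (1 - y) = b * (1 - x)` in `ZMod n`, hence `e * a = d * b * (1 - x)`. -/
theorem IsPrimitiveRoot.exists_pow_mul_pow_eq_algebraMap [IsAbelianGalois F L]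
    (hζ : IsPrimitiveRoot ζ n) (hw : w ≠ 0) {c : F} (hwc : w ^ n = algebraMap F L c)
    (τ : L ≃ₐ[F] L) {y : ℕ} (hy : τ ζ = ζ ^ y) {d e : ℕ} (hde : (d * (1 - y) : ZMod n) = e) :
    ∃ k : ℕ, ∃ u : F, algebraMap F L u = w ^ e * ζ ^ k := by
  obtain ⟨b, hb⟩ := hζ.exists_map_eq_mul_pow hw hwc τ
  suffices hfix : ∀ σ : L ≃ₐ[F] L, σ (w ^ e * ζ ^ (d * b)) = w ^ e * ζ ^ (d * b) by
    obtain ⟨u, hu⟩ := exists_algebraMap_eq_of_forall_map_eq hfix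
    exact ⟨d * b, u, hu⟩
  intro σ
  obtain ⟨a, ha⟩ := hζ.exists_map_eq_mul_pow hw hwc σ
  obtain ⟨x, hx⟩ := hζ.exists_map_eq_pow σ
  have hcomm :=
    hζ.natCast_add_mul_eq_of_commute hw (congrArg (· w) (mul_comm' σ τ)) ha hx hb hy
  rw [map_mul, map_pow, map_pow, ha, hx, mul_pow, ← pow_mul, ← pow_mul, mul_assoc, ← pow_add]
  congr 1
  refine hζ.pow_eq_pow_iff_natCast_eq.mpr ?_
  push_cast
  linear_combination (d : ZMod n) * hcomm - (a : ZMod n) * hde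

theorem exists_pow_eq_of_pow_eq_algebraMap [IsAbelianGalois F L] {q : ℕ} [Fact q.Prime]
    (hF : ∀ x : F, x ^ q = 1 → x = 1) {c : F} (hwc : w ^ q = algebraMap F L c) :
    ∃ r : F, r ^ q = c := by
  have hq := (Fact.out : q.Prime)
  rcases eq_or_ne w 0 with rfl | hw
  · exact ⟨0, (algebraMap F L).injective (by rw [← hwc, map_pow, map_zero])⟩
  by_cases hfix : ∀ σ : L ≃ₐ[F] L, σ w = w
  · obtain ⟨r, hr⟩ := exists_algebraMap_eq_of_forall_map_eq hfix
    exact ⟨r, (algebraMap F L).injective (by rw [map_pow, hr, hwc])⟩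
  obtain ⟨σ, hσ⟩ := not_forall.mp hfix
  have hζ : IsPrimitiveRoot (σ w / w) q := by
    refine IsPrimitiveRoot.iff_orderOf.mpr (orderOf_eq_prime ?_ ?_)
    · rw [div_pow, ← map_pow, hwc, AlgEquiv.commutes, ← hwc, div_self (pow_ne_zero q hw)]
    · exact fun h ↦ hσ (div_eq_one_iff_eq hw |>.mp h)
  obtain ⟨τ, hτ⟩ : ∃ τ : L ≃ₐ[F] L, τ (σ w / w) ≠ σ w / w := by
    by_contra! hfixζ
    obtain ⟨x, hx⟩ := exists_algebraMap_eq_of_forall_map_eq hfixζ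
    refine hζ.ne_one hq.one_lt (hx ▸ ?_)
    rw [hF x ((algebraMap F L).injective (by rw [map_pow, hx, hζ.pow_eq_one, map_one])), map_one]
  obtain ⟨y, hy⟩ := hζ.exists_map_eq_pow τ
  have hy1 : (1 - y : ZMod q) ≠ 0 := by
    refine sub_ne_zero.mpr fun h ↦ hτ ?_
    rw [hy, (hζ.pow_eq_pow_iff_natCast_eq (j := 1)).mpr (by rw [← h, Nat.cast_one]), pow_one]
  obtain ⟨k, r, hr⟩ := hζ.exists_pow_mul_pow_eq_algebraMap hw hwc τ hy
    (d := ((1 - y : ZMod q)⁻¹).val) (e := 1) (by simp [inv_mul_cancel₀ hy1])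
  refine ⟨r, (algebraMap F L).injective ?_⟩
  rw [map_pow, hr, pow_one, mul_pow, ← pow_mul, mul_comm k, pow_mul, hζ.pow_eq_one, one_pow,
    mul_one, hwc]

theorem exists_sq_eq_or_sq_eq_neg_of_pow_four_eq_algebraMap [IsAbelianGalois F L]
    (hF : ∀ x : F, x ^ 2 ≠ -1) {c : F} (hwc : w ^ 4 = algebraMap F L c) :
    ∃ u : F, u ^ 2 = c ∨ u ^ 2 = -c := by
  have hinj := (algebraMap F L).injective
  rcases eq_or_ne w 0 with rfl | hw
  · exact ⟨0, .inl (hinj (by rw [← hwc, map_pow, map_zero]; norm_num))⟩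
  have hsq : (w ^ 2) ^ 2 = algebraMap F L c := by rw [← pow_mul, hwc]
  by_cases hfix : ∀ σ : L ≃ₐ[F] L, σ (w ^ 2) = w ^ 2
  · obtain ⟨u, hu⟩ := exists_algebraMap_eq_of_forall_map_eq hfix
    exact ⟨u, .inl (hinj (by rw [map_pow, hu, hsq]))⟩
  obtain ⟨σ, hσ⟩ := not_forall.mp hfix
  have hσw : σ (w ^ 2) = -w ^ 2 := by
    refine (sq_eq_sq_iff_eq_or_eq_neg.mp ?_).resolve_left hσ
    rw [← map_pow, hsq, AlgEquiv.commutes]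
  have hneg_one : (-1 : L) ≠ 1 := by
    simpa using (hinj.ne (hF 1)).symm
  set i := σ w / w
  have hi : i ^ 2 = -1 := by
    rw [div_pow, ← map_pow, hσw, neg_div, div_self (pow_ne_zero 2 hw)]
  have hiprim : IsPrimitiveRoot i 4 := by
    refine IsPrimitiveRoot.iff_orderOf.mpr (orderOf_eq_prime_pow (p := 2) (n := 1) ?_ ?_)
    · rwa [pow_one, hi]
    · rw [show 2 ^ (1 + 1) = 2 * 2 by rfl, pow_mul, hi, neg_one_sq]
  obtain ⟨τ, hτ⟩ : ∃ τ : L ≃ₐ[F] L, τ i ≠ i := by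
    by_contra! hfixi
    obtain ⟨x, hx⟩ := exists_algebraMap_eq_of_forall_map_eq hfixi
    exact hF x (hinj (by rw [map_pow, hx, hi, map_neg, map_one]))
  obtain ⟨y, hy⟩ := hiprim.exists_map_eq_pow τ
  have hy2 : (2 * y : ZMod 4) = 2 := by
    have : i ^ (y * 2) = i ^ 2 := by rw [pow_mul, ← hy, ← map_pow, hi, map_neg, map_one]
    simpa [mul_comm] using hiprim.pow_eq_pow_iff_natCast_eq.mp this
  have hy1 : (y : ZMod 4) ≠ 1 := fun h ↦ hτ (by
    rw [hy, (hiprim.pow_eq_pow_iff_natCast_eq (j := 1)).mpr (by rw [h, Nat.cast_one]), pow_one])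
  have hde : ((1 : ℕ) * (1 - y) : ZMod 4) = (2 : ℕ) := by
    generalize (y : ZMod 4) = z at hy2 hy1
    revert z; decide
  obtain ⟨k, u, hu⟩ := hiprim.exists_pow_mul_pow_eq_algebraMap hw hwc τ hy hde
  refine ⟨u, ?_⟩
  have hu2 : algebraMap F L (u ^ 2) = algebraMap F L c * (-1) ^ k := by
    rw [map_pow, hu, mul_pow, ← pow_mul, hwc, ← pow_mul, mul_comm k, pow_mul, hi]
  rcases neg_one_pow_eq_or L k with h | h
  · exact .inl (hinj (by rw [hu2, h, mul_one]))
  · exact .inr (hinj (by rw [hu2, h, mul_neg_one, map_neg]))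

end Kummer

theorem pow_ne_of_padicValRat_eq_one {p : ℕ} [Fact p.Prime] {c : ℚ} (hc : padicValRat p c = 1)
    {q : ℕ} (hq : 2 ≤ q) (r : ℚ) : r ^ q ≠ c := by
  rintro rfl
  rw [padicValRat.pow] at hc
  have := Int.le_of_dvd one_pos ⟨_, hc.symm⟩
  omega

theorem pow_two_mul_ne_algebraMap {L : Type*} [Field L] [Algebra ℚ L] [IsAbelianGalois ℚ L]
    {p : ℕ} [Fact p.Prime] {c : ℚ} (hc : padicValRat p c = 1) {q : ℕ} (hq : q.Prime) (w : L) :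
    w ^ (2 * q) ≠ algebraMap ℚ L c := by
  intro hw
  obtain rfl | hq_odd := hq.eq_two_or_odd'
  · obtain ⟨u, hu | hu⟩ := exists_sq_eq_or_sq_eq_neg_of_pow_four_eq_algebraMap
      (fun x hx ↦ by nlinarith [sq_nonneg x]) hw
    · exact pow_ne_of_padicValRat_eq_one hc le_rfl u hu
    · exact pow_ne_of_padicValRat_eq_one (c := -c) (by rwa [padicValRat.neg]) le_rfl u hu
  · have := Fact.mk hq
    obtain ⟨r, hr⟩ := exists_pow_eq_of_pow_eq_algebraMap (w := w ^ 2)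
      (fun x hx ↦ hq_odd.pow_inj.mp (hx.trans (one_pow q).symm)) (by rw [← pow_mul, hw])
    exact pow_ne_of_padicValRat_eq_one hc hq.two_le r hr

theorem IsCyclotomicExtension.not_isOfFinOrder_div_pow {S : Set ℕ} {K : Type*} [Field K]
    [CharZero K] [IsCyclotomicExtension S ℚ K] {p : ℕ} [Fact p.Prime] {c : ℚ}
    (hc : padicValRat p c = 1) {s : Kˣ} (hs : (s : K) ^ 2 = algebraMap ℚ K c) (t : Kˣ) {q : ℕ}
    (hq : q.Prime) :
    ¬IsOfFinOrder (s / t ^ q) := by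
  intro hfin
  obtain ⟨k, hk, hk1⟩ := hfin.exists_pow_eq_one
  have : NeZero (k * q) := ⟨(Nat.mul_pos hk hq.pos).ne'⟩
  let L := CyclotomicField (k * q) K
  have : IsCyclotomicExtension (S ∪ {k * q}) ℚ L :=
    IsCyclotomicExtension.trans _ _ ℚ K L (algebraMap K L).injective
  have := IsCyclotomicExtension.isAbelianGalois (S ∪ {k * q}) ℚ L
  obtain ⟨η, hη⟩ := IsCyclotomicExtension.exists_isPrimitiveRoot K L (Set.mem_singleton (k * q))
    (NeZero.ne _)
  have : NeZero k := ⟨hk.ne'⟩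
  obtain ⟨j, -, hj⟩ := (hη.pow (NeZero.pos _) (mul_comm k q)).eq_pow_of_pow_eq_one
    (ξ := algebraMap K L ((s / t ^ q : Kˣ) : K))
    (by rw [← map_pow, ← Units.val_pow_eq_pow_val, hk1, Units.val_one, map_one])
  apply pow_two_mul_ne_algebraMap hc hq (η ^ j * algebraMap K L t)
  rw [pow_mul', mul_pow, ← pow_mul, mul_comm j q, pow_mul, hj, ← map_pow, ← map_mul,
    Units.val_div_eq_div_val, Units.val_pow_eq_pow_val,
    div_mul_cancel₀ _ (pow_ne_zero _ t.ne_zero), ← map_pow, hs, ← IsScalarTower.algebraMap_apply]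

theorem padicValRat_neg_one_pow_mul_self {p : ℕ} [Fact p.Prime] (e : ℕ) :
    padicValRat p ((-1) ^ e * p) = 1 := by
  rcases neg_one_pow_eq_or ℚ e with h | h <;>
    simp [h, padicValRat.self (Fact.out : p.Prime).one_lt]

theorem stmt_5_general (p m : ℕ) (hp : p.Prime)
    (K : Type) [Field K] [CharZero K]
    [IsCyclotomicExtension {p ^ m} ℚ K]
    (s : Kˣ) (hs : (s : K) ^ 2 = algebraMap ℚ K ((-1) ^ ((p - 1) / 2) * p)) :
    Function.Injective (fun x : AddCircle (1 : ℚ) =>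
      (Additive.ofMul s ⊗ₜ[ℤ] x : TensorProduct ℤ (Additive Kˣ) (AddCircle (1 : ℚ)))) := by
  have := Fact.mk hp
  refine (injective_iff_map_eq_zero
    (TensorProduct.mk ℤ (Additive Kˣ) (AddCircle (1 : ℚ)) (Additive.ofMul s))).mpr ?_
  intro x hx
  induction x using QuotientAddGroup.induction_on with | H r => ?_
  obtain ⟨b, hb⟩ := isOfFinAddOrder_sub_den_smul_of_tmul_eq_zero hx
  by_contra hr
  have hden : r.den ≠ 1 := fun h ↦ hr <| (AddCircle.coe_eq_zero_iff 1).mpr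
    ⟨r.num, by rw [zsmul_one, Rat.coe_int_num_of_den_eq_one h]⟩
  have hq := Nat.minFac_prime hden
  refine IsCyclotomicExtension.not_isOfFinOrder_div_pow (S := {p ^ m})
    (padicValRat_neg_one_pow_mul_self _) hs
    (b.toMul ^ (r.den / r.den.minFac)) hq ?_
  rw [← pow_mul, Nat.div_mul_cancel (Nat.minFac_dvd _)]
  exact isOfFinAddOrder_ofMul_iff.mp hb

/-- For an odd prime `p` and `m ≥ 1`, the map `ℚ/ℤ → ℚ(ζ_{p^m})ˣ ⊗ ℚ/ℤ`, `x ↦ √(p*) ⊗ x`,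
is injective, where `p* = (-1)^((p-1)/2) p` and `√(p*) ∈ ℚ(ζ_{p^m})`. -/
theorem stmt_5 (p m : ℕ) (hp : p.Prime) (hodd : Odd p) (hm : 1 ≤ m)
    (K : Type) [Field K] [CharZero K]
    [IsCyclotomicExtension {p ^ m} ℚ K]
    (s : Kˣ) (hs : (s : K) ^ 2 = algebraMap ℚ K ((-1) ^ ((p - 1) / 2) * p)) :
    Function.Injective (fun x : AddCircle (1 : ℚ) =>
      (Additive.ofMul s ⊗ₜ[ℤ] x : TensorProduct ℤ (Additive Kˣ) (AddCircle (1 : ℚ)))) :=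
  stmt_5_general p m hp K s hs
end

section
/- Let p ≥ 5 be prime, n ≥ 1, and let a = (p−1)/gcd(p−1,12), b = (p+1)/gcd(p+1,12). Define the (n+1)×(n+1) matrix M over ℚ by M_{ij} (indices 0 ≤ i,j ≤ n) equal to: p^i/24 if j ≥ n/2 and i ≤ j; p^{2j−i}/24 if j ≥ n/2 and i > j; p^{n−i}/24 if j < n/2 and i ≥ j; p^{n+i−2j}/24 if j < n/2 and i < j. Then det M = (ab)^n p^{(n−1)(3n−1)/4}/24 if n is odd, and det M = (ab)^n p^{n(3n−4)/4}/24 if n is even. -/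
open Finset Matrix

private lemma tel (y : ℚ) (hy : y ≠ 0) (A : ℤ) :
    ∀ t : ℕ, ∑ j ∈ Finset.range (t + 1),
      (if j = 0 then (1 : ℚ) else 1 - y ^ (-2 : ℤ)) * y ^ (A + 2 * (j : ℤ)) = y ^ (A + 2 * (t : ℤ))
  | 0 => by simp
  | (t + 1) => by
      rw [Finset.sum_range_succ, tel y hy A t]
      have h2 : y ^ (2:ℤ) ≠ 0 := zpow_ne_zero _ hy
      have e1 : y ^ (A + 2 * ((t:ℤ) + 1)) = y ^ (A + 2 * (t:ℤ)) * y ^ (2:ℤ) := by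
        rw [← zpow_add₀ hy]; ring_nf
      have e2 : y ^ (-2:ℤ) = (y ^ (2:ℤ))⁻¹ := by rw [← _root_.zpow_neg]
      push_cast
      rw [e1, e2]
      field_simp
      ring

private lemma Sstep (n : ℕ) :
    ∑ k ∈ Finset.range (n + 3), max k (n + 2 - k)
      = (∑ k ∈ Finset.range (n + 1), max k (n - k)) + (3 * n + 5) := by
  rw [Finset.sum_range_succ, Finset.sum_range_succ']
  have h1 : ∀ k ∈ Finset.range (n + 1), max (k + 1) (n + 2 - (k + 1)) = max k (n - k) + 1 := by
    intro k hk
    simp only [Finset.mem_range] at hk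
    omega
  rw [Finset.sum_congr rfl h1, Finset.sum_add_distrib]
  simp only [Finset.sum_const, Finset.card_range, smul_eq_mul, mul_one]
  omega

private lemma Ssum : ∀ n : ℕ,
    4 * (∑ k ∈ Finset.range (n + 1), max k (n - k)) = 3 * n ^ 2 + 4 * n + n % 2
  | 0 => by decide
  | 1 => by decide
  | (n + 2) => by
      have h := Ssum n
      rw [Sstep n]
      have h2 : (n + 2) % 2 = n % 2 := by omega
      have h3 : 3 * (n + 2) ^ 2 + 4 * (n + 2) = 3 * n ^ 2 + 4 * n + (12 * n + 20) := by ring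
      rw [h2, h3]
      linarith

/-- Determinant of the matrix of orders of `η(p^i τ)` at cusps of level `p^j` on `X₀(p^n)`. -/
theorem stmt_6 (p n : ℕ) (hp : p.Prime) (h5 : 5 ≤ p) (hn : 1 ≤ n)
    (a b : ℕ) (ha : a = (p - 1) / Nat.gcd (p - 1) 12) (hb : b = (p + 1) / Nat.gcd (p + 1) 12)
    (M : Matrix (Fin (n + 1)) (Fin (n + 1)) ℚ)
    (hM : ∀ i j : Fin (n + 1), M i j =
      (if n ≤ 2 * (j : ℕ) then
          (if (i : ℕ) ≤ (j : ℕ) then (p : ℚ) ^ (i : ℕ) else (p : ℚ) ^ (2 * (j : ℕ) - (i : ℕ)))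
        else
          (if (j : ℕ) ≤ (i : ℕ) then (p : ℚ) ^ (n - (i : ℕ))
            else (p : ℚ) ^ (n + (i : ℕ) - 2 * (j : ℕ)))) / 24) :
    M.det = if Odd n then ((a * b : ℚ)) ^ n * (p : ℚ) ^ ((n - 1) * (3 * n - 1) / 4) / 24
      else ((a * b : ℚ)) ^ n * (p : ℚ) ^ (n * (3 * n - 4) / 4) / 24 := by
  have hy : (p:ℚ) ≠ 0 := Nat.cast_ne_zero.mpr (by omega)
  set y : ℚ := (p : ℚ) with hydef
  set c : ℕ → ℕ := fun k => max k (n - k) with hc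
  set L : Matrix (Fin (n+1)) (Fin (n+1)) ℚ :=
    Matrix.of (fun i j : Fin (n+1) => if (j:ℕ) ≤ (i:ℕ) then y ^ ((j:ℤ) - (i:ℕ)) else 0) with hL
  set W : Matrix (Fin (n+1)) (Fin (n+1)) ℚ :=
    Matrix.of (fun j k : Fin (n+1) => if (j:ℕ) ≤ (k:ℕ) then
      (if (j:ℕ) = 0 then 1 else 1 - y ^ (-2:ℤ)) *
        y ^ ((c (k:ℕ) : ℤ) - (k:ℕ) + (j:ℕ)) / 24 else 0) with hW
  have hMLW : M = L * W := by
    ext i k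
    rw [Matrix.mul_apply, hM]
    set g : ℕ → ℚ := fun j' => (if j' ≤ (i:ℕ) then y ^ ((j':ℤ) - (i:ℕ)) else 0) *
          (if j' ≤ (k:ℕ) then (if j' = 0 then 1 else 1 - y ^ (-2:ℤ)) *
            y ^ ((c (k:ℕ) : ℤ) - (k:ℕ) + j') / 24 else 0) with hgdef
    have hg : ∀ j : Fin (n+1), L i j * W j k = g (j:ℕ) := fun j => rfl
    rw [Finset.sum_congr rfl (fun j _ => hg j), Fin.sum_univ_eq_sum_range g]
    set t : ℕ := min (i:ℕ) (k:ℕ) with ht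
    have hsub : Finset.range (t+1) ⊆ Finset.range (n+1) := by
      apply Finset.range_subset_range.mpr; have := i.isLt; omega
    rw [← Finset.sum_subset hsub (by
      intro j hj hj2
      simp only [Finset.mem_range] at hj hj2
      have : ¬ j ≤ (i:ℕ) ∨ ¬ j ≤ (k:ℕ) := by omega
      rcases this with h | h <;> simp [hgdef, h])]
    have hterm : ∀ j ∈ Finset.range (t+1), g j
        = ((if j = 0 then (1:ℚ) else 1 - y ^ (-2:ℤ)) *
            y ^ (((c (k:ℕ) : ℤ) - (i:ℕ) - (k:ℕ)) + 2 * (j:ℤ))) / 24 := by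
      intro j hj
      simp only [Finset.mem_range] at hj
      rw [hgdef]
      simp only []
      rw [if_pos (by omega), if_pos (by omega)]
      rw [show (((c (k:ℕ) : ℤ) - (i:ℕ) - (k:ℕ)) + 2 * (j:ℤ))
            = ((j:ℤ) - (i:ℕ)) + ((c (k:ℕ) : ℤ) - (k:ℕ) + j) from by ring,
          zpow_add₀ hy ((j:ℤ) - (i:ℕ)) ((c (k:ℕ) : ℤ) - (k:ℕ) + (j:ℕ))]
      ring
    rw [Finset.sum_congr rfl hterm, ← Finset.sum_div, tel y hy _ t]
    have hknat : (k:ℕ) ≤ n := by have := k.isLt; omega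
    have hinat : (i:ℕ) ≤ n := by have := i.isLt; omega
    congr 1
    have hcq : c (k:ℕ) = max (k:ℕ) (n - (k:ℕ)) := rfl
    split_ifs with h1 h2 h2
    · rw [show ((c (k:ℕ) : ℤ) - (i:ℕ) - (k:ℕ) + 2 * (t:ℤ)) = (((i:ℕ):ℕ):ℤ) from by
        rw [hcq] at *; push_cast; omega, zpow_natCast]
    · rw [show ((c (k:ℕ) : ℤ) - (i:ℕ) - (k:ℕ) + 2 * (t:ℤ)) = ((2*(k:ℕ) - (i:ℕ) : ℕ):ℤ) from by
        rw [hcq] at *; push_cast; omega, zpow_natCast]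
    · rw [show ((c (k:ℕ) : ℤ) - (i:ℕ) - (k:ℕ) + 2 * (t:ℤ)) = ((n - (i:ℕ) : ℕ):ℤ) from by
        rw [hcq] at *; push_cast; omega, zpow_natCast]
    · rw [show ((c (k:ℕ) : ℤ) - (i:ℕ) - (k:ℕ) + 2 * (t:ℤ)) = ((n + (i:ℕ) - 2*(k:ℕ) : ℕ):ℤ) from by
        rw [hcq] at *; push_cast; omega, zpow_natCast]
  have hdetL : L.det = 1 := by
    rw [Matrix.det_of_lowerTriangular L (fun i j hij => by
      have hij' : (i:ℕ) < (j:ℕ) := hij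
      simp only [hL, Matrix.of_apply]
      rw [if_neg (by omega)])]
    apply Finset.prod_eq_one
    intro i _
    simp only [hL, Matrix.of_apply, if_pos (le_refl _)]
    rw [show ((i:ℕ):ℤ) - ((i:ℕ):ℤ) = 0 from by ring, zpow_zero]
  have hdetW : W.det = (1 - y^(-2:ℤ))^n * y ^ (∑ k ∈ Finset.range (n+1), c k) / 24^(n+1) := by
    rw [Matrix.det_of_upperTriangular (show W.BlockTriangular id from fun j k hjk => by
      have hjk' : (k:ℕ) < (j:ℕ) := hjk
      simp only [hW, Matrix.of_apply]
      rw [if_neg (by omega)])]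
    have hdiag : ∀ k : Fin (n+1), W k k =
        (if (k:ℕ) = 0 then (1:ℚ) else 1 - y ^ (-2:ℤ)) * y ^ (c (k:ℕ)) / 24 := by
      intro k
      simp only [hW, Matrix.of_apply, if_pos (le_refl _)]
      rw [show ((c (k:ℕ) : ℤ) - (k:ℕ) + (k:ℕ)) = ((c (k:ℕ) : ℕ) : ℤ) from by ring, zpow_natCast]
    rw [Finset.prod_congr rfl (fun k _ => hdiag k)]
    rw [Finset.prod_div_distrib, Finset.prod_mul_distrib, Finset.prod_const,
      Finset.card_univ, Fintype.card_fin]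
    congr 1
    · congr 1
      · rw [Fin.prod_univ_succ]
        simp only [Fin.val_zero, if_pos rfl, one_mul, Fin.val_succ]
        rw [Finset.prod_congr rfl (fun k _ => by rw [if_neg (by omega : ¬ ((k:ℕ) + 1 = 0))]),
          Finset.prod_const, Finset.card_univ, Fintype.card_fin]
        simp
      · rw [Finset.prod_pow_eq_pow_sum, Fin.sum_univ_eq_sum_range]
  -- number theory: a * b * 24 = p^2 - 1
  have hd2 : ¬ (2 ∣ p) := fun h => by
    rcases (Nat.Prime.eq_one_or_self_of_dvd hp 2 h) with h' | h' <;> omega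
  have hd3 : ¬ (3 ∣ p) := fun h => by
    rcases (Nat.Prime.eq_one_or_self_of_dvd hp 3 h) with h' | h' <;> omega
  have h12 : p % 12 = 1 ∨ p % 12 = 5 ∨ p % 12 = 7 ∨ p % 12 = 11 := by omega
  have hgg : Nat.gcd (p-1) 12 * Nat.gcd (p+1) 12 = 24 := by
    have e1 : Nat.gcd (p-1) 12 = Nat.gcd ((p-1) % 12) 12 := by
      rw [Nat.gcd_comm, Nat.gcd_rec]
    have e2 : Nat.gcd (p+1) 12 = Nat.gcd ((p+1) % 12) 12 := by
      rw [Nat.gcd_comm, Nat.gcd_rec]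
    rcases h12 with h | h | h | h
    · rw [e1, e2, (show (p-1) % 12 = 0 by omega), (show (p+1) % 12 = 2 by omega)]; decide
    · rw [e1, e2, (show (p-1) % 12 = 4 by omega), (show (p+1) % 12 = 6 by omega)]; decide
    · rw [e1, e2, (show (p-1) % 12 = 6 by omega), (show (p+1) % 12 = 8 by omega)]; decide
    · rw [e1, e2, (show (p-1) % 12 = 10 by omega), (show (p+1) % 12 = 0 by omega)]; decide
  have ha' : (a:ℚ) * (Nat.gcd (p-1) 12 : ℚ) = (p:ℚ) - 1 := by
    have h' : a * Nat.gcd (p-1) 12 = p - 1 := by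
      rw [ha]; exact Nat.div_mul_cancel (Nat.gcd_dvd_left _ _)
    have h'' := congrArg (fun x : ℕ => (x:ℚ)) h'
    simp only [Nat.cast_mul] at h''
    rw [h'', Nat.cast_sub (by omega : 1 ≤ p), Nat.cast_one]
  have hb' : (b:ℚ) * (Nat.gcd (p+1) 12 : ℚ) = (p:ℚ) + 1 := by
    have h' : b * Nat.gcd (p+1) 12 = p + 1 := by
      rw [hb]; exact Nat.div_mul_cancel (Nat.gcd_dvd_left _ _)
    have h'' := congrArg (fun x : ℕ => (x:ℚ)) h'
    simp only [Nat.cast_mul] at h''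
    rw [h'', Nat.cast_add, Nat.cast_one]
  have hg' : (Nat.gcd (p-1) 12 : ℚ) * (Nat.gcd (p+1) 12 : ℚ) = 24 := by
    exact_mod_cast congrArg (fun x : ℕ => (x:ℚ)) hgg
  have hab : (a:ℚ) * b * 24 = y^2 - 1 := by
    calc (a:ℚ) * b * 24 = ((a:ℚ) * (Nat.gcd (p-1) 12 : ℚ)) * ((b:ℚ) * (Nat.gcd (p+1) 12 : ℚ)) := by
          rw [← hg']; ring
      _ = ((p:ℚ) - 1) * ((p:ℚ) + 1) := by rw [ha', hb']
      _ = y^2 - 1 := by rw [hydef]; ring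
  -- sum of exponents
  have hSsum : 4 * (∑ k ∈ Finset.range (n+1), c k) = 3 * n ^ 2 + 4 * n + n % 2 := by
    simp only [hc]; exact Ssum n
  have hdet : M.det = (1 - y^(-2:ℤ))^n * y ^ (∑ k ∈ Finset.range (n+1), c k) / 24^(n+1) := by
    rw [hMLW, Matrix.det_mul, hdetL, hdetW, one_mul]
  have key : ∀ E : ℕ, (∑ k ∈ Finset.range (n+1), c k) = E + 2*n →
      M.det = ((a:ℚ) * (b:ℚ))^n * y ^ E / 24 := by
    intro E hE
    rw [hdet, hE, pow_add, pow_mul]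
    have hy2 : y^(-2:ℤ) = (y^2)⁻¹ := by
      rw [show ((-2:ℤ)) = -((2:ℕ):ℤ) from by norm_num, _root_.zpow_neg, zpow_natCast]
    have hyn : (y^2:ℚ) ≠ 0 := pow_ne_zero _ hy
    calc (1 - y^(-2:ℤ))^n * (y^E * (y^2)^n) / 24^(n+1)
        = ((1 - y^(-2:ℤ)) * y^2)^n * y^E / 24^(n+1) := by rw [mul_pow]; ring
      _ = (y^2 - 1)^n * y^E / 24^(n+1) := by
          rw [show (1 - y^(-2:ℤ)) * y^2 = y^2 - 1 from by rw [hy2]; field_simp]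
      _ = ((a:ℚ)*b*24)^n * y^E / 24^(n+1) := by rw [hab]
      _ = ((a:ℚ)*(b:ℚ))^n * y^E / 24 := by
          rw [mul_pow, pow_succ]
          have h24 : (24:ℚ)^n ≠ 0 := by norm_num
          field_simp
  by_cases ho : Odd n
  · rw [if_pos ho]
    obtain ⟨m, hm⟩ := ho
    apply key
    have hE4 : (n-1)*(3*n-1) = (3*(m*m)+m)*4 := by
      rw [show n-1 = 2*m from by omega, show 3*n-1 = 6*m+2 from by omega]; ring
    have hEq : (n-1)*(3*n-1)/4 = 3*(m*m)+m := by
      rw [hE4, Nat.mul_div_cancel _ (by norm_num)]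
    have hnn : 3*n^2+4*n+n%2 = 4*(3*(m*m)+5*m+2) := by
      rw [hm, show (2*m+1)%2 = 1 from by omega]; ring
    rw [hEq]
    rw [hnn] at hSsum
    linarith
  · rw [if_neg ho]
    have he : ¬ n % 2 = 1 := fun h => ho (Nat.odd_iff.mpr h)
    obtain ⟨q, hq⟩ : ∃ q, n = 2*q+2 := ⟨(n-2)/2, by omega⟩
    apply key
    have hE4 : n*(3*n-4) = (3*(q*q)+4*q+1)*4 := by
      rw [show 3*n-4 = 6*q+2 from by omega, hq]; ring
    have hEq : n*(3*n-4)/4 = 3*(q*q)+4*q+1 := by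
      rw [hE4, Nat.mul_div_cancel _ (by norm_num)]
    have hnn : 3*n^2+4*n+n%2 = 4*(3*(q*q)+8*q+5) := by
      rw [hq, show (2*q+2)%2 = 0 from by omega]; ring
    rw [hEq]
    rw [hnn] at hSsum
    linarith
end
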